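/- Let F be a connected GSC and x a cut point of F. Then there exist n₀ ∈ ℤ⁺ and two distinct words ω, τ ∈ D^{n₀} \ Ω_{n₀}(x) which are well separated by x. -/

import Mathlib

open Set Topology

noncomputable def phi (N : ℕ) (i : ℕ × ℕ) (p : ℝ × ℝ) : ℝ × ℝ :=
  ((p.1 + (i.1 : ℝ)) / (N : ℝ), (p.2 + (i.2 : ℝ)) / (N : ℝ))

noncomputable def phiW (N : ℕ) (l : List (ℕ × ℕ)) : ℝ × ℝ → ℝ × ℝ :=
  l.foldr (fun i g => phi N i ∘ g) id

def Words (D : Finset (ℕ × ℕ)) (k : ℕ) : Set (List (ℕ × ℕ)) :=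
  {l | l.length = k ∧ ∀ a ∈ l, a ∈ D}

def GoodDigits (N : ℕ) (D : Finset (ℕ × ℕ)) : Prop :=
  2 ≤ N ∧ (∀ i ∈ D, i.1 < N ∧ i.2 < N) ∧ 1 < D.card ∧ D.card < N ^ 2

def IsAttractor (N : ℕ) (D : Finset (ℕ × ℕ)) (F : Set (ℝ × ℝ)) : Prop :=
  F.Nonempty ∧ IsCompact F ∧ F = ⋃ i ∈ D, phi N i '' F

def OmegaW (N : ℕ) (D : Finset (ℕ × ℕ)) (F : Set (ℝ × ℝ)) (x : ℝ × ℝ) (k : ℕ) :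
    Set (List (ℕ × ℕ)) :=
  {l | l ∈ Words D k ∧ x ∈ phiW N l '' F}

def Ek (N : ℕ) (D : Finset (ℕ × ℕ)) (F : Set (ℝ × ℝ)) (x : ℝ × ℝ) (k : ℕ) :
    Set (ℝ × ℝ) :=
  ⋃ l ∈ Words D k \ OmegaW N D F x k, phiW N l '' F

def IsRep (N : ℕ) (D : Finset (ℕ × ℕ)) (F : Set (ℝ × ℝ)) (x : ℝ × ℝ)
    (ii : ℕ → ℕ × ℕ) : Prop :=
  (∀ k, ii k ∈ D) ∧ ∀ k : ℕ, x ∈ phiW N (List.ofFn fun j : Fin k => ii (j : ℕ)) '' F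

def SepComp (E A B : Set (ℝ × ℝ)) : Prop :=
  A ⊆ E ∧ B ⊆ E ∧
    ∀ y ∈ A, ∀ z ∈ B, connectedComponentIn E y ≠ connectedComponentIn E z

def WellSep (N : ℕ) (D : Finset (ℕ × ℕ)) (F : Set (ℝ × ℝ)) (x : ℝ × ℝ) (n : ℕ)
    (ω τ : List (ℕ × ℕ)) : Prop :=
  ∀ p : ℕ, 1 ≤ p → SepComp (Ek N D F x (n + p)) (phiW N ω '' F) (phiW N τ '' F)

lemma phiW_nil (N : ℕ) : phiW N [] = id := rfl

lemma phiW_cons (N : ℕ) (i : ℕ × ℕ) (l : List (ℕ × ℕ)) :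
    phiW N (i :: l) = phi N i ∘ phiW N l := rfl

lemma phiW_append (N : ℕ) (l m : List (ℕ × ℕ)) :
    phiW N (l ++ m) = phiW N l ∘ phiW N m := by
  induction l with
  | nil => rfl
  | cons a l ih => simp [phiW_cons, ih, Function.comp_assoc]

lemma phi_continuous (N : ℕ) (i : ℕ × ℕ) : Continuous (phi N i) := by
  unfold phi; fun_prop

lemma phiW_continuous (N : ℕ) (l : List (ℕ × ℕ)) : Continuous (phiW N l) := by
  induction l with
  | nil => exact continuous_id
  | cons a l ih => exact (phi_continuous N a).comp ih

lemma dist_phi (N : ℕ) (hN : 0 < N) (i : ℕ × ℕ) (p q : ℝ × ℝ) :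
    dist (phi N i p) (phi N i q) = dist p q / N := by
  have hN' : (0:ℝ) < N := by exact_mod_cast hN
  simp only [phi, Prod.dist_eq, Real.dist_eq]
  rw [div_sub_div_same, div_sub_div_same, abs_div, abs_div,
    abs_of_pos hN', max_div_div_right hN'.le]
  ring_nf

lemma dist_phiW (N : ℕ) (hN : 0 < N) (l : List (ℕ × ℕ)) (p q : ℝ × ℝ) :
    dist (phiW N l p) (phiW N l q) = dist p q / N ^ l.length := by
  induction l with
  | nil => simp [phiW_nil]
  | cons a l ih =>
    rw [phiW_cons, Function.comp_apply, Function.comp_apply, dist_phi N hN, ih]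
    rw [List.length_cons, pow_succ, div_div]

section withF
variable {N : ℕ} {D : Finset (ℕ × ℕ)} {F : Set (ℝ × ℝ)}

lemma phiW_image_subset (hF : F = ⋃ i ∈ D, phi N i '' F)
    {l : List (ℕ × ℕ)} (hl : ∀ a ∈ l, a ∈ D) : phiW N l '' F ⊆ F := by
  induction l with
  | nil => simp [phiW_nil]
  | cons a l ih =>
    have ha : a ∈ D := hl a List.mem_cons_self
    have h1 : phiW N (a :: l) '' F ⊆ phi N a '' F := by
      rw [phiW_cons, Set.image_comp]
      exact Set.image_mono (ih fun b hb => hl b (List.mem_cons_of_mem a hb))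
    refine h1.trans ?_
    intro p hp
    rw [hF]
    exact Set.mem_biUnion ha hp

lemma F_eq_words (hF : F = ⋃ i ∈ D, phi N i '' F) (k : ℕ) :
    F = ⋃ l ∈ Words D k, phiW N l '' F := by
  induction k with
  | zero =>
    ext p
    simp only [Set.mem_iUnion]
    constructor
    · intro hp
      exact ⟨[], ⟨rfl, by simp⟩, by simpa [phiW_nil] using hp⟩
    · rintro ⟨l, ⟨hl0, -⟩, hp⟩
      rw [List.length_eq_zero_iff] at hl0
      subst hl0
      simpa [phiW_nil] using hp
  | succ k ih =>
    ext p
    simp only [Set.mem_iUnion]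
    constructor
    · intro hp
      rw [hF] at hp
      simp only [Set.mem_iUnion] at hp
      obtain ⟨i, hi, q, hq, rfl⟩ := hp
      rw [ih] at hq
      simp only [Set.mem_iUnion] at hq
      obtain ⟨l, hl, r, hr, rfl⟩ := hq
      exact ⟨i :: l, ⟨by simp [hl.1], by
        intro a ha
        rcases List.mem_cons.1 ha with rfl | ha
        · exact hi
        · exact hl.2 a ha⟩, r, hr, rfl⟩
    · rintro ⟨l, hl, hp⟩
      exact phiW_image_subset hF hl.2 hp

end withF

section withF2
variable {N : ℕ} {D : Finset (ℕ × ℕ)} {F : Set (ℝ × ℝ)} {x : ℝ × ℝ}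

lemma cell_subset_Fx {l : List (ℕ × ℕ)} {k : ℕ}
    (hFeq : F = ⋃ i ∈ D, phi N i '' F)
    (hl : l ∈ Words D k \ OmegaW N D F x k) :
    phiW N l '' F ⊆ F \ {x} := by
  intro u hu
  refine ⟨phiW_image_subset hFeq hl.1.2 hu, ?_⟩
  intro h
  simp only [Set.mem_singleton_iff] at h
  exact hl.2 ⟨hl.1, h ▸ hu⟩

lemma Ek_subset_Fx (hFeq : F = ⋃ i ∈ D, phi N i '' F) (k : ℕ) :
    Ek N D F x k ⊆ F \ {x} := by
  intro u hu
  simp only [Ek, Set.mem_iUnion] at hu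
  obtain ⟨l, hl, hu⟩ := hu
  exact cell_subset_Fx hFeq hl hu

lemma cell_subset_Ek (hFeq : F = ⋃ i ∈ D, phi N i '' F) {n : ℕ} (p : ℕ)
    {ω : List (ℕ × ℕ)} (hω : ω ∈ Words D n \ OmegaW N D F x n) :
    phiW N ω '' F ⊆ Ek N D F x (n + p) := by
  intro u hu
  obtain ⟨q, hq, rfl⟩ := hu
  rw [F_eq_words hFeq p] at hq
  simp only [Set.mem_iUnion] at hq
  obtain ⟨m, hm, r, hr, rfl⟩ := hq
  have hsub' : phiW N (ω ++ m) '' F ⊆ phiW N ω '' F := by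
    rw [phiW_append, Set.image_comp]
    exact Set.image_mono (phiW_image_subset hFeq hm.2)
  have hmem : ω ++ m ∈ Words D (n + p) \ OmegaW N D F x (n + p) := by
    constructor
    · refine ⟨by simp [hω.1.1, hm.1], ?_⟩
      intro a ha
      rcases List.mem_append.1 ha with h | h
      · exact hω.1.2 a h
      · exact hm.2 a h
    · intro hcon
      exact hω.2 ⟨hω.1, hsub' hcon.2⟩
  refine Set.mem_biUnion hmem ?_
  rw [phiW_append]
  exact ⟨r, hr, rfl⟩

lemma subset_left_of_sep {s U V T : Set (ℝ × ℝ)} (hs : IsPreconnected s)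
    (hU : IsOpen U) (hV : IsOpen V) (hsT : s ⊆ T) (hcov : T ⊆ U ∪ V)
    (hdisj : T ∩ (U ∩ V) = ∅) (hne : (s ∩ U).Nonempty) : s ⊆ U := by
  by_contra h
  have hV' : (s ∩ V).Nonempty := by
    obtain ⟨w, hw, hwU⟩ := Set.not_subset.1 h
    exact ⟨w, hw, (hcov (hsT hw)).resolve_left hwU⟩
  obtain ⟨w, hw⟩ := hs U V hU hV (hsT.trans hcov) hne hV'
  exact (Set.eq_empty_iff_forall_notMem.1 hdisj w) ⟨hsT hw.1, hw.2⟩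

end withF2

theorem stmt9 (N : ℕ) (D : Finset (ℕ × ℕ)) (hND : GoodDigits N D)
    (F : Set (ℝ × ℝ)) (hF : IsAttractor N D F) (hFconn : IsConnected F)
    (x : ℝ × ℝ) (hx : x ∈ F) (hcut : ¬ IsPreconnected (F \ {x})) :
    ∃ n0 : ℕ, 1 ≤ n0 ∧ ∃ ω τ : List (ℕ × ℕ),
      ω ∈ Words D n0 \ OmegaW N D F x n0 ∧
      τ ∈ Words D n0 \ OmegaW N D F x n0 ∧
      ω ≠ τ ∧ WellSep N D F x n0 ω τ := by
  obtain ⟨hFne, hFcpt, hFeq⟩ := hF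
  have hN0 : 0 < N := lt_of_lt_of_le (by norm_num) hND.1
  have hN1 : (1:ℝ) < N := by exact_mod_cast lt_of_lt_of_le (by norm_num) hND.1
  rw [IsPreconnected] at hcut
  push_neg at hcut
  obtain ⟨U, V, hU, hV, hcov, ⟨y₀, hy₀⟩, ⟨z₀, hz₀⟩, hdisj⟩ := hcut
  obtain ⟨C, hC⟩ := Metric.isBounded_iff.1 hFcpt.isBounded
  have hy₀x : y₀ ≠ x := hy₀.1.2
  have hz₀x : z₀ ≠ x := hz₀.1.2
  set ε := min (dist x y₀) (dist x z₀) with hεdef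
  have hε : 0 < ε :=
    lt_min (dist_pos.2 (Ne.symm hy₀x)) (dist_pos.2 (Ne.symm hz₀x))
  obtain ⟨k, hk⟩ := pow_unbounded_of_one_lt (C / ε) hN1
  set n := max k 1 with hndef
  have hn1 : 1 ≤ n := le_max_right _ _
  have hCn : C < ε * N ^ n := by
    have h1 : C < ε * N ^ k := (div_lt_iff₀ hε).1 hk |>.trans_eq (mul_comm _ _)
    refine h1.trans_le ?_
    have : (N:ℝ) ^ k ≤ (N:ℝ) ^ n := pow_le_pow_right₀ hN1.le (le_max_left _ _)
    nlinarith
  have hNn : (0:ℝ) < (N:ℝ) ^ n := by positivity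
  have key : ∀ w ∈ F, ε ≤ dist x w →
      ∃ l, l ∈ Words D n \ OmegaW N D F x n ∧ w ∈ phiW N l '' F := by
    intro w hw hdw
    have hw' : w ∈ ⋃ l ∈ Words D n, phiW N l '' F := (F_eq_words hFeq n) ▸ hw
    simp only [Set.mem_iUnion] at hw'
    obtain ⟨l, hl, hwl⟩ := hw'
    refine ⟨l, ⟨hl, ?_⟩, hwl⟩
    intro hcon
    obtain ⟨p, hp, hpx⟩ := hcon.2
    obtain ⟨q, hq, hqw⟩ := hwl
    have hdist : dist x w = dist p q / N ^ n := by
      rw [← hpx, ← hqw, dist_phiW N hN0, hl.1]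
    have : dist x w ≤ C / N ^ n := by
      rw [hdist]
      exact div_le_div_of_nonneg_right (hC hp hq) hNn.le
    have hlt : C / N ^ n < ε := (div_lt_iff₀ hNn).2 (by linarith [hCn])
    linarith
  obtain ⟨ω, hω, hy₀ω⟩ := key y₀ hy₀.1.1 (min_le_left _ _)
  obtain ⟨τ, hτ, hz₀τ⟩ := key z₀ hz₀.1.1 (min_le_right _ _)
  have hconnω : IsPreconnected (phiW N ω '' F) :=
    (hFconn.image _ (phiW_continuous N ω).continuousOn).isPreconnected
  have hconnτ : IsPreconnected (phiW N τ '' F) :=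
    (hFconn.image _ (phiW_continuous N τ).continuousOn).isPreconnected
  have hωU : phiW N ω '' F ⊆ U :=
    subset_left_of_sep hconnω hU hV (cell_subset_Fx hFeq hω) hcov hdisj
      ⟨y₀, hy₀ω, hy₀.2⟩
  have hτV : phiW N τ '' F ⊆ V := by
    refine subset_left_of_sep hconnτ hV hU (cell_subset_Fx hFeq hτ)
      (fun u hu => (hcov hu).symm) ?_ ⟨z₀, hz₀τ, hz₀.2⟩
    rw [Set.inter_comm V U]; exact hdisj
  have hωτ : ω ≠ τ := by
    intro h
    subst h
    exact (Set.eq_empty_iff_forall_notMem.1 hdisj y₀)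
      ⟨hy₀.1, hωU hy₀ω, hτV hy₀ω⟩
  refine ⟨n, hn1, ω, τ, hω, hτ, hωτ, ?_⟩
  intro p hp
  have hA : phiW N ω '' F ⊆ Ek N D F x (n + p) := cell_subset_Ek hFeq p hω
  have hB : phiW N τ '' F ⊆ Ek N D F x (n + p) := cell_subset_Ek hFeq p hτ
  refine ⟨hA, hB, ?_⟩
  intro y hy z hz heq
  set E := Ek N D F x (n + p) with hEdef
  have hyE : y ∈ E := hA hy
  have hzE : z ∈ E := hB hz
  have hyC : y ∈ connectedComponentIn E y := mem_connectedComponentIn hyE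
  have hzC : z ∈ connectedComponentIn E y := by
    rw [heq]; exact mem_connectedComponentIn hzE
  have hCpre : IsPreconnected (connectedComponentIn E y) :=
    isPreconnected_connectedComponentIn
  have hCsub : connectedComponentIn E y ⊆ F \ {x} :=
    (connectedComponentIn_subset E y).trans (Ek_subset_Fx hFeq (n + p))
  obtain ⟨w, hw⟩ := hCpre U V hU hV (hCsub.trans hcov)
    ⟨y, hyC, hωU hy⟩ ⟨z, hzC, hτV hz⟩
  exact (Set.eq_empty_iff_forall_notMem.1 hdisj w) ⟨hCsub hw.1, hw.2⟩
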